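/- arXiv:1606.08927 — 2 statements merged into one kernel-verified Lean document; each statement's English description precedes it below -/
import Mathlib

section
/- Let 0 < β ≤ 1 and d ≥ 1. When the reduced clique lossless coupling scheme is used, with each representative vertex assigned vertex-weight 1 and the gateway vertex of a user joining p networks assigned vertex-weight k − p, a set S = {s_1,…,s_p} ⊆ U influences at least a β fraction of users in G^{1..k} after d propagation hops (i.e., |A^d(G^{1..k},S)| ≥ β·|U|) if and only if the total vertex-weight of the active vertices caused by S' = {s_1^0,…,s_p^0} after 2d hops in the reduced clique coupled network G is at least a β fraction of the total vertex-weight of all vertices of G. -/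
open scoped Classical

/-- LT active sets on a single directed weighted network `G = (V, w, θ)`:
`ltIter w θ S 0 = S` and
`ltIter w θ S (t+1) = ltIter w θ S t ∪ { x | Σ_{y ∈ A^t} w y x ≥ θ x }`. -/
noncomputable def ltIter {V : Type*} [Fintype V] [DecidableEq V]
    (w : V → V → ℝ) (θ : V → ℝ) (S : Finset V) : ℕ → Finset V
  | 0 => S
  | t + 1 =>
      ltIter w θ S t ∪
        Finset.univ.filter (fun x => θ x ≤ ∑ y ∈ ltIter w θ S t, w y x)

/-- LT active sets on the multiplex system `G^{1..k}`:
`A^0 = S` and `A^{t+1} = A^t ∪ { u | ∃ i, Σ_{v ∈ A^t} w^i v u ≥ θ^i u }`. -/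
noncomputable def multiIter {U : Type*} [Fintype U] [DecidableEq U] {k : ℕ}
    (w : Fin k → U → U → ℝ) (θ : Fin k → U → ℝ) (S : Finset U) : ℕ → Finset U
  | 0 => S
  | t + 1 =>
      multiIter w θ S t ∪
        Finset.univ.filter
          (fun u => ∃ i : Fin k, θ i u ≤ ∑ v ∈ multiIter w θ S t, w i v u)

/-- Thresholds of the clique lossless coupled network.  The vertex `(u, none)` is the
gateway vertex `u⁰` (threshold 1), and `(u, some i)` is the representative vertex `uⁱ`
(threshold `θ^i(u)` if `u ∈ V^i`, and 1 otherwise, i.e. for dummy vertices). -/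
noncomputable def cliqueTheta {U : Type*} [DecidableEq U] {k : ℕ}
    (Vmem : Fin k → Finset U) (θ : Fin k → U → ℝ) : U × Option (Fin k) → ℝ
  | (_, none) => 1
  | (u, some i) => if u ∈ Vmem i then θ i u else 1

/-- Edge weights of the clique lossless coupled network:
`w(u⁰, vⁱ) = w^i(u, v)` for users `u ≠ v` and `1 ≤ i ≤ k`;
`w(uⁱ, uʲ) = θ(uʲ)` for all `0 ≤ i ≠ j ≤ k` (synchronization clique);
all other weights are 0. -/
noncomputable def cliqueW {U : Type*} [DecidableEq U] {k : ℕ}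
    (Vmem : Fin k → Finset U) (w : Fin k → U → U → ℝ) (θ : Fin k → U → ℝ) :
    U × Option (Fin k) → U × Option (Fin k) → ℝ :=
  fun x y =>
    if x.1 = y.1 then
      if x.2 = y.2 then 0 else cliqueTheta Vmem θ y
    else
      match x.2, y.2 with
      | none, some i => w i x.1 y.1
      | _, _ => 0

/-- A vertex of the full clique coupled vertex type is *created* in the reduced
clique scheme iff it is a gateway vertex, or a representative vertex `(u, some i)`
with `u ∈ V^i`. -/
def createdClique {U : Type*} {k : ℕ} (Vmem : Fin k → Finset U) :
    U × Option (Fin k) → Prop :=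
  fun x => ∀ i : Fin k, x.2 = some i → x.1 ∈ Vmem i

/-- Edge weights of the reduced clique lossless coupled network: as in the clique
scheme, but only between created vertices (non-created vertices are absent, i.e.
isolated with threshold 1, so they never become active). -/
noncomputable def redCliqueW {U : Type*} [DecidableEq U] {k : ℕ}
    (Vmem : Fin k → Finset U) (w : Fin k → U → U → ℝ) (θ : Fin k → U → ℝ) :
    U × Option (Fin k) → U × Option (Fin k) → ℝ :=
  fun x y =>
    if createdClique Vmem x ∧ createdClique Vmem y then cliqueW Vmem w θ x y else 0

/-- Vertex-weights of the reduced clique scheme: each created representative vertex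
has weight 1; the gateway vertex of a user joining `p` networks has weight `k - p`;
non-created (absent) vertices have weight 0. -/
noncomputable def redCliqueVW {U : Type*} [Fintype U] [DecidableEq U] {k : ℕ}
    (Vmem : Fin k → Finset U) : U × Option (Fin k) → ℝ
  | (u, none) =>
      (k : ℝ) - ((Finset.univ.filter (fun i : Fin k => u ∈ Vmem i)).card : ℝ)
  | (u, some i) => if u ∈ Vmem i then 1 else 0

section Aux
set_option linter.unusedSectionVars false

variable {U : Type*} [Fintype U] [DecidableEq U] {k : ℕ}
variable (Vmem : Fin k → Finset U) (w : Fin k → U → U → ℝ) (θ : Fin k → U → ℝ)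

lemma createdClique_gw (u : U) : createdClique Vmem (u, none) := by
  intro i h; exact absurd h (by simp)

lemma createdClique_some {u : U} {i : Fin k} (hu : u ∈ Vmem i) :
    createdClique Vmem (u, some i) := by
  intro j hj
  obtain rfl : i = j := by injection hj
  exact hu

lemma cliqueTheta_gw (u : U) : cliqueTheta Vmem θ (u, none) = 1 := rfl

lemma cliqueTheta_some (u : U) (i : Fin k) :
    cliqueTheta Vmem θ (u, some i) = if u ∈ Vmem i then θ i u else 1 := rfl

lemma cliqueTheta_pos (hθpos : ∀ i u, 0 < θ i u) (y : U × Option (Fin k)) :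
    0 < cliqueTheta Vmem θ y := by
  rcases y with ⟨u, _ | i⟩
  · norm_num [cliqueTheta_gw]
  · rw [cliqueTheta_some]
    split_ifs
    · exact hθpos i u
    · norm_num

lemma redCliqueW_eq_cliqueW {x y : U × Option (Fin k)}
    (hx : createdClique Vmem x) (hy : createdClique Vmem y) :
    redCliqueW Vmem w θ x y = cliqueW Vmem w θ x y := by
  simp only [redCliqueW]
  split_ifs with h
  · rfl
  · exact absurd ⟨hx, hy⟩ h

lemma redCliqueW_noncreated {x y : U × Option (Fin k)}
    (hy : ¬ createdClique Vmem y) : redCliqueW Vmem w θ x y = 0 := by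
  simp only [redCliqueW]
  split_ifs with h
  · exact absurd h.2 hy
  · rfl

lemma redCliqueW_gw_rep {u : U} {i : Fin k} (hu : u ∈ Vmem i) :
    redCliqueW Vmem w θ (u, none) (u, some i) = θ i u := by
  rw [redCliqueW_eq_cliqueW Vmem w θ (createdClique_gw Vmem u) (createdClique_some Vmem hu)]
  simp [cliqueW, cliqueTheta, hu]

lemma redCliqueW_rep_gw {u : U} {i : Fin k} (hu : u ∈ Vmem i) :
    redCliqueW Vmem w θ (u, some i) (u, none) = 1 := by
  rw [redCliqueW_eq_cliqueW Vmem w θ (createdClique_some Vmem hu) (createdClique_gw Vmem u)]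
  simp [cliqueW, cliqueTheta]

lemma redCliqueW_rep_rep {u : U} {i j : Fin k} (hij : i ≠ j)
    (hui : u ∈ Vmem i) (huj : u ∈ Vmem j) :
    redCliqueW Vmem w θ (u, some i) (u, some j) = θ j u := by
  rw [redCliqueW_eq_cliqueW Vmem w θ (createdClique_some Vmem hui) (createdClique_some Vmem huj)]
  simp [cliqueW, cliqueTheta, hij, huj]

lemma redCliqueW_gw_rep_ne {v u : U} {i : Fin k} (hvu : v ≠ u) (hu : u ∈ Vmem i) :
    redCliqueW Vmem w θ (v, none) (u, some i) = w i v u := by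
  rw [redCliqueW_eq_cliqueW Vmem w θ (createdClique_gw Vmem v) (createdClique_some Vmem hu)]
  simp [cliqueW, hvu]

lemma redCliqueW_to_gw_zero {x : U × Option (Fin k)} {u : U}
    (h : x.1 ≠ u ∨ x.2 = none) : redCliqueW Vmem w θ x (u, none) = 0 := by
  simp only [redCliqueW]
  split_ifs with hc
  · rcases x with ⟨a, _ | j⟩
    · rcases h with h | h
      · simp [cliqueW, h]
      · simp [cliqueW, cliqueTheta]
    · rcases h with h | h
      · simp [cliqueW, h]
      · simp at h
  · rfl

lemma redCliqueW_to_rep_zero {x : U × Option (Fin k)} {u : U} {i : Fin k}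
    (h1 : x.1 ≠ u) (h2 : x.2 ≠ none) : redCliqueW Vmem w θ x (u, some i) = 0 := by
  simp only [redCliqueW]
  split_ifs with hc
  · rcases x with ⟨a, _ | j⟩
    · simp at h2
    · simp [cliqueW, h1]
  · rfl

lemma redCliqueW_nonneg (hw0 : ∀ i v u, 0 ≤ w i v u) (hθpos : ∀ i u, 0 < θ i u)
    (x y : U × Option (Fin k)) : 0 ≤ redCliqueW Vmem w θ x y := by
  simp only [redCliqueW]
  split_ifs with hc
  · rcases x with ⟨a, o⟩; rcases y with ⟨b, o'⟩
    simp only [cliqueW]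
    split_ifs
    · exact le_rfl
    · exact (cliqueTheta_pos Vmem θ hθpos _).le
    · rcases o with _ | i <;> rcases o' with _ | j <;> simp [hw0]
  · exact le_rfl



/-- The set of all created vertices of users in `X` (gateways + created reps). -/
noncomputable def phiSet (X : Finset U) : Finset (U × Option (Fin k)) :=
  Finset.univ.filter fun x => x.1 ∈ X ∧ createdClique Vmem x

/-- Representatives newly activated by the gateways of `X`. -/
noncomputable def nSet (X : Finset U) : Finset (U × Option (Fin k)) :=
  Finset.univ.filter fun x => ∃ i, x.2 = some i ∧ θ i x.1 ≤ ∑ v ∈ X, w i v x.1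

lemma mem_phiSet {X : Finset U} {x : U × Option (Fin k)} :
    x ∈ phiSet Vmem X ↔ x.1 ∈ X ∧ createdClique Vmem x := by
  simp [phiSet]

lemma mem_nSet {X : Finset U} {x : U × Option (Fin k)} :
    x ∈ nSet w θ X ↔ ∃ i, x.2 = some i ∧ θ i x.1 ≤ ∑ v ∈ X, w i v x.1 := by
  simp [nSet]

lemma nSet_mem_Vmem (hwV : ∀ i v u, v ∉ Vmem i ∨ u ∉ Vmem i → w i v u = 0)
    (hθpos : ∀ i u, 0 < θ i u) {X : Finset U} {u : U} {i : Fin k}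
    (h : θ i u ≤ ∑ v ∈ X, w i v u) : u ∈ Vmem i := by
  by_contra hu
  have : ∑ v ∈ X, w i v u = 0 := Finset.sum_eq_zero fun v _ => hwV i v u (Or.inr hu)
  rw [this] at h
  exact absurd h (not_le.mpr (hθpos i u))

lemma nSet_created (hwV : ∀ i v u, v ∉ Vmem i ∨ u ∉ Vmem i → w i v u = 0)
    (hθpos : ∀ i u, 0 < θ i u) {X : Finset U} {x : U × Option (Fin k)}
    (h : x ∈ nSet w θ X) : createdClique Vmem x := by
  rw [mem_nSet] at h
  obtain ⟨i, h2, hle⟩ := h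
  intro j hj
  rw [h2] at hj
  obtain rfl : i = j := by injection hj
  exact nSet_mem_Vmem Vmem w θ hwV hθpos hle

lemma gw_image_subset_phiSet {X : Finset U} :
    X.image (fun v => (v, (none : Option (Fin k)))) ⊆ phiSet Vmem X := by
  intro x hx
  obtain ⟨v, hv, rfl⟩ := Finset.mem_image.mp hx
  exact (mem_phiSet Vmem).mpr ⟨hv, createdClique_gw Vmem v⟩

lemma phiSet_mono {X Y : Finset U} (h : X ⊆ Y) : phiSet Vmem X ⊆ phiSet Vmem Y := by
  intro x hx
  rw [mem_phiSet] at *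
  exact ⟨h hx.1, hx.2⟩

/-- The key exact sum computation: the total weight flowing into the representative
vertex `(u, some i)` from an active set `C`, when no vertex of user `u` is in `C`,
equals `Σ_{v ∈ X} w^i(v,u)` where `X` is the set of users whose gateways are in `C`. -/
lemma sum_into_rep {X : Finset U} {C : Finset (U × Option (Fin k))} {u : U} {i : Fin k}
    (hu : u ∉ X) (hVi : u ∈ Vmem i)
    (hsub : X.image (fun v => (v, (none : Option (Fin k)))) ⊆ C)
    (hnu : ∀ x ∈ C, x.1 ≠ u)
    (hnone : ∀ x ∈ C, x.2 = none → x.1 ∈ X) :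
    ∑ x ∈ C, redCliqueW Vmem w θ x (u, some i) = ∑ v ∈ X, w i v u := by
  rw [← Finset.sum_subset hsub ?_]
  · rw [Finset.sum_image (by intro a _ b _ h; exact congrArg Prod.fst h)]
    refine Finset.sum_congr rfl fun v hv => ?_
    exact redCliqueW_gw_rep_ne Vmem w θ (fun h => hu (h ▸ hv)) hVi
  · intro x hx hnx
    rcases hx2 : x.2 with _ | j
    · exfalso
      refine hnx (Finset.mem_image.mpr ⟨x.1, hnone x hx hx2, ?_⟩)
      rcases x with ⟨a, o⟩
      simp only at hx2
      rw [hx2]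
    · exact redCliqueW_to_rep_zero Vmem w θ (hnu x hx) (by rw [hx2]; simp)

lemma sum_into_gw_zero {C : Finset (U × Option (Fin k))} {u : U}
    (h : ∀ x ∈ C, x.1 ≠ u) :
    ∑ x ∈ C, redCliqueW Vmem w θ x (u, none) = 0 :=
  Finset.sum_eq_zero fun x hx => redCliqueW_to_gw_zero Vmem w θ (Or.inl (h x hx))

lemma sum_into_noncreated {C : Finset (U × Option (Fin k))} {y : U × Option (Fin k)}
    (h : ¬ createdClique Vmem y) :
    ∑ x ∈ C, redCliqueW Vmem w θ x y = 0 :=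
  Finset.sum_eq_zero fun x _ => redCliqueW_noncreated Vmem w θ h




/-- One LT step starting from any set between the gateways of `X` and `φ(X)`
yields `φ(X) ∪ N(X)`. -/
lemma stepA (hw0 : ∀ i v u, 0 ≤ w i v u)
    (hwV : ∀ i v u, v ∉ Vmem i ∨ u ∉ Vmem i → w i v u = 0)
    (hθpos : ∀ i u, 0 < θ i u)
    {X : Finset U} {C : Finset (U × Option (Fin k))}
    (hC1 : X.image (fun v => (v, (none : Option (Fin k)))) ⊆ C)
    (hC2 : C ⊆ phiSet Vmem X) :
    (C ∪ Finset.univ.filter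
        (fun y => cliqueTheta Vmem θ y ≤ ∑ x ∈ C, redCliqueW Vmem w θ x y))
      = phiSet Vmem X ∪ nSet w θ X := by
  ext y
  simp only [Finset.mem_union, Finset.mem_filter, Finset.mem_univ, true_and]
  constructor
  · rintro (hy | hact)
    · exact Or.inl (hC2 hy)
    · rcases y with ⟨u, _ | i⟩
      · -- gateway: must have u ∈ X
        have hu : u ∈ X := by
          by_contra hu
          rw [sum_into_gw_zero Vmem w θ
            (fun x hx h => hu (by rw [← h]; exact ((mem_phiSet Vmem).mp (hC2 hx)).1)),
            cliqueTheta_gw] at hact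
          norm_num at hact
        exact Or.inl ((mem_phiSet Vmem).mpr ⟨hu, createdClique_gw Vmem u⟩)
      · by_cases hVi : u ∈ Vmem i
        · by_cases hu : u ∈ X
          · exact Or.inl ((mem_phiSet Vmem).mpr ⟨hu, createdClique_some Vmem hVi⟩)
          · right
            rw [sum_into_rep Vmem w θ hu hVi hC1
              (fun x hx h => hu (by rw [← h]; exact ((mem_phiSet Vmem).mp (hC2 hx)).1))
              (fun x hx _ => ((mem_phiSet Vmem).mp (hC2 hx)).1),
              cliqueTheta_some, if_pos hVi] at hact
            exact (mem_nSet w θ).mpr ⟨i, rfl, hact⟩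
        · exfalso
          have hnc : ¬ createdClique Vmem ((u : U), some i) := fun h => hVi (h i rfl)
          rw [sum_into_noncreated Vmem w θ hnc, cliqueTheta_some, if_neg hVi] at hact
          norm_num at hact
  · rintro (hy | hy)
    · obtain ⟨hyX, hyc⟩ := (mem_phiSet Vmem).mp hy
      rcases y with ⟨u, _ | i⟩
      · exact Or.inl (hC1 (Finset.mem_image.mpr ⟨u, hyX, rfl⟩))
      · -- created rep of a user of X: activated by own gateway
        right
        have hVi : u ∈ Vmem i := hyc i rfl
        have hgw : ((u : U), (none : Option (Fin k))) ∈ C :=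
          hC1 (Finset.mem_image.mpr ⟨u, hyX, rfl⟩)
        calc cliqueTheta Vmem θ (u, some i) = θ i u := by
              rw [cliqueTheta_some, if_pos hVi]
          _ = redCliqueW Vmem w θ (u, none) (u, some i) :=
              (redCliqueW_gw_rep Vmem w θ hVi).symm
          _ ≤ ∑ x ∈ C, redCliqueW Vmem w θ x (u, some i) :=
              Finset.single_le_sum
                (fun x _ => redCliqueW_nonneg Vmem w θ hw0 hθpos x _) hgw
    · obtain ⟨i, hy2, hle⟩ := (mem_nSet w θ).mp hy
      have hVi : y.1 ∈ Vmem i := nSet_mem_Vmem Vmem w θ hwV hθpos hle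
      obtain ⟨u, o⟩ := y
      simp only at hy2 hVi
      subst hy2
      by_cases hu : u ∈ X
      · right
        have hgw : ((u : U), (none : Option (Fin k))) ∈ C :=
          hC1 (Finset.mem_image.mpr ⟨u, hu, rfl⟩)
        calc cliqueTheta Vmem θ (u, some i) = θ i u := by
              rw [cliqueTheta_some, if_pos hVi]
          _ = redCliqueW Vmem w θ (u, none) (u, some i) :=
              (redCliqueW_gw_rep Vmem w θ hVi).symm
          _ ≤ ∑ x ∈ C, redCliqueW Vmem w θ x (u, some i) :=
              Finset.single_le_sum
                (fun x _ => redCliqueW_nonneg Vmem w θ hw0 hθpos x _) hgw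
      · right
        rw [sum_into_rep Vmem w θ hu hVi hC1
          (fun x hx h => hu (by rw [← h]; exact ((mem_phiSet Vmem).mp (hC2 hx)).1))
          (fun x hx _ => ((mem_phiSet Vmem).mp (hC2 hx)).1),
          cliqueTheta_some, if_pos hVi]
        exact hle



/-- One LT step starting from `φ(X) ∪ N(X)` yields `φ(X')` where `X'` is the next
multiplex active set. -/
lemma stepB (hw0 : ∀ i v u, 0 ≤ w i v u)
    (hwV : ∀ i v u, v ∉ Vmem i ∨ u ∉ Vmem i → w i v u = 0)
    (hθpos : ∀ i u, 0 < θ i u) {X : Finset U} :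
    ((phiSet Vmem X ∪ nSet w θ X) ∪ Finset.univ.filter
        (fun y => cliqueTheta Vmem θ y ≤
          ∑ x ∈ phiSet Vmem X ∪ nSet w θ X, redCliqueW Vmem w θ x y))
      = phiSet Vmem
          (X ∪ Finset.univ.filter (fun u => ∃ i, θ i u ≤ ∑ v ∈ X, w i v u)) := by
  set X' : Finset U := X ∪ Finset.univ.filter (fun u => ∃ i, θ i u ≤ ∑ v ∈ X, w i v u)
    with hX'
  set C : Finset (U × Option (Fin k)) := phiSet Vmem X ∪ nSet w θ X with hC
  have hmemX' : ∀ u : U, u ∈ X' ↔ u ∈ X ∨ ∃ i, θ i u ≤ ∑ v ∈ X, w i v u := by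
    intro u; simp [hX']
  -- no vertex of a user outside X' lies in C
  have hnotin : ∀ u : U, u ∉ X' → ∀ x ∈ C, x.1 ≠ u := by
    intro u hu x hx h
    rcases Finset.mem_union.mp hx with hx | hx
    · exact hu ((hmemX' u).mpr (Or.inl (h ▸ ((mem_phiSet Vmem).mp hx).1)))
    · obtain ⟨i, hx2, hle⟩ := (mem_nSet w θ).mp hx
      exact hu ((hmemX' u).mpr (Or.inr ⟨i, h ▸ hle⟩))
  have hsubC : X.image (fun v => (v, (none : Option (Fin k)))) ⊆ C :=
    (gw_image_subset_phiSet Vmem).trans Finset.subset_union_left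
  have hnoneC : ∀ x ∈ C, x.2 = none → x.1 ∈ X := by
    intro x hx h2
    rcases Finset.mem_union.mp hx with hx | hx
    · exact ((mem_phiSet Vmem).mp hx).1
    · obtain ⟨i, hx2, _⟩ := (mem_nSet w θ).mp hx
      rw [h2] at hx2; exact absurd hx2 (by simp)
  ext y
  simp only [Finset.mem_union, Finset.mem_filter, Finset.mem_univ, true_and]
  constructor
  · rintro (hyC | hact)
    rcases Finset.mem_union.mp hyC with hy | hy
    · exact phiSet_mono Vmem Finset.subset_union_left hy
    · obtain ⟨i, hy2, hle⟩ := (mem_nSet w θ).mp hy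
      refine (mem_phiSet Vmem).mpr ⟨?_, nSet_created Vmem w θ hwV hθpos hy⟩
      exact (hmemX' y.1).mpr (Or.inr ⟨i, hle⟩)
    · rcases y with ⟨u, _ | i⟩
      · have hu : u ∈ X' := by
          by_contra hu
          rw [sum_into_gw_zero Vmem w θ (hnotin u hu), cliqueTheta_gw] at hact
          norm_num at hact
        exact (mem_phiSet Vmem).mpr ⟨hu, createdClique_gw Vmem u⟩
      · by_cases hVi : u ∈ Vmem i
        · have hu : u ∈ X' := by
            by_contra hu
            have huX : u ∉ X := fun h => hu ((hmemX' u).mpr (Or.inl h))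
            rw [sum_into_rep Vmem w θ huX hVi hsubC (hnotin u hu) hnoneC,
              cliqueTheta_some, if_pos hVi] at hact
            exact hu ((hmemX' u).mpr (Or.inr ⟨i, hact⟩))
          exact (mem_phiSet Vmem).mpr ⟨hu, createdClique_some Vmem hVi⟩
        · exfalso
          have hnc : ¬ createdClique Vmem ((u : U), some i) := fun h => hVi (h i rfl)
          rw [sum_into_noncreated Vmem w θ hnc, cliqueTheta_some, if_neg hVi] at hact
          norm_num at hact
  · intro hy
    obtain ⟨hyX', hyc⟩ := (mem_phiSet Vmem).mp hy
    rcases (hmemX' y.1).mp hyX' with hyX | ⟨i, hle⟩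
    · exact Or.inl (Finset.mem_union.mpr (Or.inl ((mem_phiSet Vmem).mpr ⟨hyX, hyc⟩)))
    · have hVi : y.1 ∈ Vmem i := nSet_mem_Vmem Vmem w θ hwV hθpos hle
      have hrep : ((y.1 : U), some i) ∈ C :=
        Finset.mem_union_right _ ((mem_nSet w θ).mpr ⟨i, rfl, hle⟩)
      rcases hy2 : y.2 with _ | j
      · -- gateway activated by the representative (y.1, some i)
        right
        obtain ⟨u, o⟩ := y
        simp only at hy2 hVi hrep ⊢
        subst hy2
        calc cliqueTheta Vmem θ (u, none) = 1 := cliqueTheta_gw Vmem θ u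
          _ = redCliqueW Vmem w θ (u, some i) (u, none) :=
              (redCliqueW_rep_gw Vmem w θ hVi).symm
          _ ≤ ∑ x ∈ C, redCliqueW Vmem w θ x (u, none) :=
              Finset.single_le_sum
                (fun x _ => redCliqueW_nonneg Vmem w θ hw0 hθpos x _) hrep
      · obtain ⟨u, o⟩ := y
        simp only at hy2 hVi hrep hyc ⊢
        subst hy2
        have hVj : u ∈ Vmem j := hyc j rfl
        by_cases hij : i = j
        · subst hij
          exact Or.inl (Finset.mem_union.mpr (Or.inr ((mem_nSet w θ).mpr ⟨i, rfl, hle⟩)))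
        · right
          calc cliqueTheta Vmem θ (u, some j) = θ j u := by
                rw [cliqueTheta_some, if_pos hVj]
            _ = redCliqueW Vmem w θ (u, some i) (u, some j) :=
                (redCliqueW_rep_rep Vmem w θ hij hVi hVj).symm
            _ ≤ ∑ x ∈ C, redCliqueW Vmem w θ x (u, some j) :=
                Finset.single_le_sum
                  (fun x _ => redCliqueW_nonneg Vmem w θ hw0 hθpos x _) hrep



lemma ltIter_succ' {V : Type*} [Fintype V] [DecidableEq V]
    (w' : V → V → ℝ) (θ' : V → ℝ) (S : Finset V) (t : ℕ) :
    ltIter w' θ' S (t + 1) =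
      ltIter w' θ' S t ∪
        Finset.univ.filter (fun x => θ' x ≤ ∑ y ∈ ltIter w' θ' S t, w' y x) := by
  rfl

lemma multiIter_succ' (S : Finset U) (t : ℕ) :
    multiIter w θ S (t + 1) =
      multiIter w θ S t ∪
        Finset.univ.filter
          (fun u => ∃ i : Fin k, θ i u ≤ ∑ v ∈ multiIter w θ S t, w i v u) := by
  rfl

/-- Main correspondence: after `2(t+1)` hops in the reduced clique coupled network,
the active set is exactly `φ(A^{t+1})`. -/
lemma main_iter (hw0 : ∀ i v u, 0 ≤ w i v u)
    (hwV : ∀ i v u, v ∉ Vmem i ∨ u ∉ Vmem i → w i v u = 0)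
    (hθpos : ∀ i u, 0 < θ i u) (S : Finset U) (t : ℕ) :
    ltIter (redCliqueW Vmem w θ) (cliqueTheta Vmem θ)
        (S.image (fun s => (s, (none : Option (Fin k))))) (2 * (t + 1))
      = phiSet Vmem (multiIter w θ S (t + 1)) := by
  induction t with
  | zero =>
      have h2 : 2 * (0 + 1) = 0 + 1 + 1 := by norm_num
      rw [h2, ltIter_succ', ltIter_succ']
      have h0 : ltIter (redCliqueW Vmem w θ) (cliqueTheta Vmem θ)
          (S.image (fun s => (s, (none : Option (Fin k))))) 0
          = S.image (fun s => (s, (none : Option (Fin k)))) := rfl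
      rw [h0, stepA Vmem w θ hw0 hwV hθpos subset_rfl (gw_image_subset_phiSet Vmem),
        stepB Vmem w θ hw0 hwV hθpos]
      rw [multiIter_succ' w θ]
      rfl
  | succ t ih =>
      have h2 : 2 * (t + 1 + 1) = 2 * (t + 1) + 1 + 1 := by ring
      rw [h2, ltIter_succ', ltIter_succ', ih,
        stepA Vmem w θ hw0 hwV hθpos (gw_image_subset_phiSet Vmem) subset_rfl,
        stepB Vmem w θ hw0 hwV hθpos]
      rw [multiIter_succ' w θ]
      rfl

/-- The total vertex-weight of `φ(X)` is `k·|X|`. -/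
lemma sum_vw_phiSet (X : Finset U) :
    ∑ x ∈ phiSet Vmem X, redCliqueVW Vmem x = (k : ℝ) * X.card := by
  have hsub : phiSet Vmem X ⊆ X ×ˢ (Finset.univ : Finset (Option (Fin k))) := by
    intro x hx
    rw [Finset.mem_product]
    exact ⟨((mem_phiSet Vmem).mp hx).1, Finset.mem_univ _⟩
  rw [Finset.sum_subset hsub ?_]
  · rw [Finset.sum_product]
    have hinner : ∀ u : U,
        ∑ o : Option (Fin k), redCliqueVW Vmem (u, o) = (k : ℝ) := by
      intro u
      rw [Fintype.sum_option]
      have h1 : redCliqueVW Vmem (u, (none : Option (Fin k)))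
          = (k : ℝ) - ((Finset.univ.filter (fun i : Fin k => u ∈ Vmem i)).card : ℝ) :=
        rfl
      have h2 : ∀ i : Fin k,
          redCliqueVW Vmem (u, some i) = if u ∈ Vmem i then (1 : ℝ) else 0 :=
        fun i => rfl
      rw [h1]
      simp only [h2]
      rw [Finset.sum_boole]
      ring
    calc ∑ u ∈ X, ∑ o : Option (Fin k), redCliqueVW Vmem (u, o)
        = ∑ u ∈ X, (k : ℝ) := Finset.sum_congr rfl (fun u _ => hinner u)
      _ = (k : ℝ) * X.card := by rw [Finset.sum_const, nsmul_eq_mul, mul_comm]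
  · intro x hx hnx
    have hx1 : x.1 ∈ X := (Finset.mem_product.mp hx).1
    have hnc : ¬ createdClique Vmem x := fun h => hnx ((mem_phiSet Vmem).mpr ⟨hx1, h⟩)
    rcases x with ⟨a, _ | i⟩
    · exact absurd (createdClique_gw Vmem a) hnc
    · have hna : a ∉ Vmem i := fun h => hnc (createdClique_some Vmem h)
      exact if_neg hna

lemma filter_created_eq :
    Finset.univ.filter (fun x : U × Option (Fin k) => createdClique Vmem x)
      = phiSet Vmem Finset.univ := by
  ext x
  simp [phiSet]

end Aux
/-- **Theorem 4, clique case.** With the reduced clique lossless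
coupling scheme and the above vertex-weights, a seed set `S ⊆ U` influences at least
a `β` fraction of the users of `G^{1..k}` after `d` hops iff the total vertex-weight
of the active vertices caused by `S' = { s⁰ : s ∈ S }` after `2d` hops in the reduced
clique coupled network is at least a `β` fraction of the total vertex-weight of all
its vertices. -/
theorem reduced_clique_beta_fraction_iff
    {U : Type*} [Fintype U] [DecidableEq U] {k : ℕ} (hk : 1 ≤ k)
    (Vmem : Fin k → Finset U) (w : Fin k → U → U → ℝ) (θ : Fin k → U → ℝ)
    (hw0 : ∀ i v u, 0 ≤ w i v u)
    (hwV : ∀ i v u, v ∉ Vmem i ∨ u ∉ Vmem i → w i v u = 0)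
    (hθpos : ∀ i u, 0 < θ i u)
    (β : ℝ) (hβ0 : 0 < β) (hβ1 : β ≤ 1)
    (S : Finset U) (d : ℕ) (hd : 1 ≤ d) :
    β * (Fintype.card U : ℝ) ≤ ((multiIter w θ S d).card : ℝ) ↔
      β * (∑ x ∈ Finset.univ.filter
              (fun x : U × Option (Fin k) => createdClique Vmem x),
            redCliqueVW Vmem x) ≤
        ∑ x ∈ ltIter (redCliqueW Vmem w θ) (cliqueTheta Vmem θ)
            (S.image (fun s => (s, (none : Option (Fin k))))) (2 * d),
          redCliqueVW Vmem x := by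
  obtain ⟨t, rfl⟩ : ∃ t, d = t + 1 := ⟨d - 1, (Nat.succ_pred_eq_of_pos hd).symm⟩
  rw [main_iter Vmem w θ hw0 hwV hθpos S t, sum_vw_phiSet, filter_created_eq,
    sum_vw_phiSet, Finset.card_univ]
  have hk' : (0 : ℝ) < (k : ℝ) := by
    have : 0 < k := hk
    exact_mod_cast this
  constructor
  · intro h
    calc β * ((k : ℝ) * (Fintype.card U : ℝ))
        = (k : ℝ) * (β * (Fintype.card U : ℝ)) := by ring
      _ ≤ (k : ℝ) * ((multiIter w θ S (t + 1)).card : ℝ) :=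
          mul_le_mul_of_nonneg_left h hk'.le
  · intro h
    have h2 : (k : ℝ) * (β * (Fintype.card U : ℝ))
        ≤ (k : ℝ) * ((multiIter w θ S (t + 1)).card : ℝ) := by
      calc (k : ℝ) * (β * (Fintype.card U : ℝ))
          = β * ((k : ℝ) * (Fintype.card U : ℝ)) := by ring
        _ ≤ (k : ℝ) * ((multiIter w θ S (t + 1)).card : ℝ) := h
    exact le_of_mul_le_mul_left h2 hk'
end

section
/- Let 0 < β ≤ 1 and d ≥ 1. When the reduced star lossless coupling scheme is used, with each representative vertex assigned vertex-weight 1, the gateway vertex of a user joining p networks assigned vertex-weight k − p, and intermediate synchronization vertices assigned vertex-weight 0, a set S = {s_1,…,s_p} ⊆ U influences at least a β fraction of users in G^{1..k} after d propagation hops (i.e., |A^d(G^{1..k},S)| ≥ β·|U|) if and only if the total vertex-weight of the active vertices caused by S' = {s_1^0,…,s_p^0} after 3d hops in the reduced star coupled network G is at least a β fraction of the total vertex-weight of all vertices of G. -/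
open scoped Classical

/-- Vertex indices of the star lossless coupled network: `gateway` is the gateway
vertex `u⁰`, `rep i` is the representative vertex `uⁱ` (`1 ≤ i ≤ k`), and `mid` is
the intermediate synchronization vertex `u^{k+1}`. -/
inductive StarIdx (k : ℕ) where
  | gateway : StarIdx k
  | rep : Fin k → StarIdx k
  | mid : StarIdx k
  deriving DecidableEq, Fintype

/-- Thresholds of the star lossless coupled network: `θ(u⁰) = θ(u^{k+1}) = 1`;
`θ(uⁱ) = θ^i(u)` if `u ∈ V^i` and 1 otherwise. -/
noncomputable def starTheta {U : Type*} [DecidableEq U] {k : ℕ}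
    (Vmem : Fin k → Finset U) (θ : Fin k → U → ℝ) : U × StarIdx k → ℝ
  | (_, .gateway) => 1
  | (_, .mid) => 1
  | (u, .rep i) => if u ∈ Vmem i then θ i u else 1

/-- Edge weights of the star lossless coupled network:
`w(u⁰, vⁱ) = w^i(u, v)` for users `u ≠ v` and `1 ≤ i ≤ k`;
`w(uⁱ, u^{k+1}) = 1` and `w(u^{k+1}, uⁱ) = θ(uⁱ)` for `1 ≤ i ≤ k`;
`w(u^{k+1}, u⁰) = w(u⁰, u^{k+1}) = 1`; all other weights are 0. -/
noncomputable def starW {U : Type*} [DecidableEq U] {k : ℕ}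
    (Vmem : Fin k → Finset U) (w : Fin k → U → U → ℝ) (θ : Fin k → U → ℝ) :
    U × StarIdx k → U × StarIdx k → ℝ :=
  fun x y =>
    if x.1 = y.1 then
      match x.2, y.2 with
      | .rep _, .mid => 1
      | .mid, .rep _ => starTheta Vmem θ y
      | .mid, .gateway => 1
      | .gateway, .mid => 1
      | _, _ => 0
    else
      match x.2, y.2 with
      | .gateway, .rep i => w i x.1 y.1
      | _, _ => 0

/-- A vertex of the full star coupled vertex type is *created* in the reduced star
scheme iff it is a gateway or intermediate vertex, or a representative vertex
`(u, rep i)` with `u ∈ V^i`. -/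
def createdStar {U : Type*} {k : ℕ} (Vmem : Fin k → Finset U) :
    U × StarIdx k → Prop :=
  fun x => ∀ i : Fin k, x.2 = StarIdx.rep i → x.1 ∈ Vmem i

/-- Edge weights of the reduced star lossless coupled network: as in the star
scheme, but only between created vertices (non-created vertices are absent, i.e.
isolated with threshold 1, so they never become active). -/
noncomputable def redStarW {U : Type*} [DecidableEq U] {k : ℕ}
    (Vmem : Fin k → Finset U) (w : Fin k → U → U → ℝ) (θ : Fin k → U → ℝ) :
    U × StarIdx k → U × StarIdx k → ℝ :=
  fun x y =>
    if createdStar Vmem x ∧ createdStar Vmem y then starW Vmem w θ x y else 0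

/-- Vertex-weights of the reduced star scheme: each created representative vertex
has weight 1; the gateway vertex of a user joining `p` networks has weight `k - p`;
intermediate vertices have weight 0; non-created (absent) vertices have weight 0. -/
noncomputable def redStarVW {U : Type*} [Fintype U] [DecidableEq U] {k : ℕ}
    (Vmem : Fin k → Finset U) : U × StarIdx k → ℝ
  | (u, .gateway) =>
      (k : ℝ) - ((Finset.univ.filter (fun i : Fin k => u ∈ Vmem i)).card : ℝ)
  | (_, .mid) => 0
  | (u, .rep i) => if u ∈ Vmem i then 1 else 0

/-!
A set of active vertices of the reduced star network is described by three pieces of data: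
the users `G` with active gateway, the users `M` with active intermediate vertex, and for each
network `i` the users `R i` with active representative. One LT hop acts on this description by
explicit set operations. Starting from all created vertices of a set `B` of users, the first hop fires the representatives triggered through the gateways of `B`, the
second the intermediate vertices of the newly triggered users, the third their gateways and
remaining representatives; so three hops simulate one multiplex hop. Two hops from the seed
gateways reach the same state as two hops from all created vertices of `S`, which handles the
first multiplex hop. Finally, all created vertices of a user have total vertex-weight `k`, so
both sides of the inequality are those of the multiplex one scaled by `k`.
-/

open Finset

noncomputable def ltStep {V : Type*} [Fintype V] [DecidableEq V]
    (w : V → V → ℝ) (θ : V → ℝ) (A : Finset V) : Finset V :=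
  A ∪ univ.filter (fun x => θ x ≤ ∑ y ∈ A, w y x)

theorem ltIter_eq_iterate {V : Type*} [Fintype V] [DecidableEq V]
    (w : V → V → ℝ) (θ : V → ℝ) (S : Finset V) (n : ℕ) :
    ltIter w θ S n = (ltStep w θ)^[n] S := by
  induction n with
  | zero => rfl
  | succ n ih => rw [Function.iterate_succ_apply', ← ih]; rfl

namespace StarIdx

theorem sum_univ {k : ℕ} (f : StarIdx k → ℝ) :
    ∑ s, f s = f gateway + f mid + ∑ i, f (rep i) := by
  let e : StarIdx k ≃ Fin k ⊕ Bool :=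
    { toFun := fun | gateway => .inr false | mid => .inr true | rep i => .inl i
      invFun := fun | .inl i => rep i | .inr false => gateway | .inr true => mid
      left_inv := by rintro (_ | i | _) <;> rfl
      right_inv := by rintro (i | _ | _) <;> rfl }
  rw [← e.symm.sum_comp, Fintype.sum_sum_type, Fintype.sum_bool]
  simp only [e, Equiv.coe_fn_symm_mk]
  ring

end StarIdx

section ActiveSets

variable {U : Type*} [Fintype U] {k : ℕ} (Vmem : Fin k → Finset U)

noncomputable def starActive (G M : Finset U) (R : Fin k → Finset U) : Finset (U × StarIdx k) :=
  univ.filter fun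
    | (u, .gateway) => u ∈ G
    | (u, .mid) => u ∈ M
    | (u, .rep i) => u ∈ Vmem i ∧ u ∈ R i

variable {Vmem}
variable {G M : Finset U} {R : Fin k → Finset U} {u : U}

@[simp] theorem gateway_mem_starActive :
    (u, .gateway) ∈ starActive Vmem G M R ↔ u ∈ G := by simp [starActive]

@[simp] theorem mid_mem_starActive :
    (u, .mid) ∈ starActive Vmem G M R ↔ u ∈ M := by simp [starActive]

@[simp] theorem rep_mem_starActive {i : Fin k} :
    (u, .rep i) ∈ starActive Vmem G M R ↔ u ∈ Vmem i ∧ u ∈ R i := by simp [starActive]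

variable [DecidableEq U] (Vmem G M R)

theorem sum_starActive (f : U × StarIdx k → ℝ) :
    ∑ x ∈ starActive Vmem G M R, f x =
      ∑ u ∈ G, f (u, .gateway) + ∑ u ∈ M, f (u, .mid) +
        ∑ i, ∑ u ∈ Vmem i ∩ R i, f (u, .rep i) := by
  rw [starActive, sum_filter, Fintype.sum_prod_type]
  simp only [StarIdx.sum_univ, sum_add_distrib]
  rw [sum_comm (s := univ)]
  simp only [← mem_inter, sum_ite_mem, univ_inter]
  congr 2 <;> convert sum_ite_mem_eq _ _ <;> infer_instance

end ActiveSets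

section CoupledStep

variable {U : Type*} [DecidableEq U] {k : ℕ}
  (Vmem : Fin k → Finset U) (w : Fin k → U → U → ℝ) (θ : Fin k → U → ℝ)

theorem redStarW_apply_gateway (y : U × StarIdx k) (u : U) :
    redStarW Vmem w θ y (u, .gateway) = if y = (u, .mid) then 1 else 0 := by
  obtain ⟨v, s⟩ := y
  by_cases hv : v = u
  · subst hv
    rcases s <;> simp [redStarW, starW, createdStar]
  · rcases s <;> simp [redStarW, starW, hv]

theorem redStarW_apply_mid (y : U × StarIdx k) (u : U) :
    redStarW Vmem w θ y (u, .mid) =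
      if y.1 = u ∧ y.2 ≠ .mid ∧ createdStar Vmem y then 1 else 0 := by
  obtain ⟨v, s⟩ := y
  by_cases hv : v = u
  · subst hv
    rcases s <;> simp [redStarW, starW, createdStar]
  · rcases s <;> simp [redStarW, starW, hv]

theorem redStarW_apply_rep (y : U × StarIdx k) (u : U) (i : Fin k) :
    redStarW Vmem w θ y (u, .rep i) =
      if u ∈ Vmem i then
        (if y = (u, .mid) then θ i u else 0) +
          (if y.2 = .gateway ∧ y.1 ≠ u then w i y.1 u else 0)
      else 0 := by
  obtain ⟨v, s⟩ := y
  by_cases hv : v = u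
  · subst hv
    rcases s <;> by_cases hvi : v ∈ Vmem i <;> simp [redStarW, starW, starTheta, createdStar, hvi]
  · rcases s <;> by_cases hui : u ∈ Vmem i <;> simp [redStarW, starW, createdStar, hv, hui]

noncomputable def triggered [Fintype U] (i : Fin k) (G : Finset U) : Finset U :=
  univ.filter fun u => θ i u ≤ ∑ v ∈ G.erase u, w i v u

variable [Fintype U] {Vmem w θ} (G M : Finset U) (R : Fin k → Finset U) (u : U)

theorem starTheta_le_sum_gateway_iff :
    starTheta Vmem θ (u, .gateway) ≤
        ∑ y ∈ starActive Vmem G M R, redStarW Vmem w θ y (u, .gateway) ↔ u ∈ M := by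
  by_cases hu : u ∈ M <;> simp [redStarW_apply_gateway, starTheta, hu]

theorem starTheta_le_sum_mid_iff :
    starTheta Vmem θ (u, .mid) ≤ ∑ y ∈ starActive Vmem G M R, redStarW Vmem w θ y (u, .mid) ↔
      u ∈ G ∨ ∃ i, u ∈ Vmem i ∧ u ∈ R i := by
  simp only [redStarW_apply_mid, sum_boole, starTheta, Nat.one_le_cast, one_le_card,
    filter_nonempty_iff]
  constructor
  · rintro ⟨⟨v, _ | i | _⟩, hv, rfl, hmid, -⟩
    · exact .inl (by simpa using hv)
    · exact .inr ⟨i, by simpa using hv⟩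
    · exact absurd rfl hmid
  · rintro (hG | ⟨i, hi, hR⟩)
    · exact ⟨(u, .gateway), by simpa using hG, rfl, by simp, by simp [createdStar]⟩
    · exact ⟨(u, .rep i), by simpa using ⟨hi, hR⟩, rfl, by simp, by simpa [createdStar]⟩

theorem starTheta_le_sum_rep_iff (hw0 : ∀ i v u, 0 ≤ w i v u) (i : Fin k) :
    starTheta Vmem θ (u, .rep i) ≤
        ∑ y ∈ starActive Vmem G M R, redStarW Vmem w θ y (u, .rep i) ↔
      u ∈ Vmem i ∧ (u ∈ M ∨ θ i u ≤ ∑ v ∈ G.erase u, w i v u) := by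
  have h_erase : ∑ v ∈ G, (if v = u then 0 else w i v u) = ∑ v ∈ G.erase u, w i v u := by
    rw [← filter_ne', sum_filter]
    exact sum_congr rfl fun v _ => by split_ifs <;> simp_all
  by_cases hi : u ∈ Vmem i
  · have h_nonneg : 0 ≤ ∑ v ∈ G.erase u, w i v u := sum_nonneg fun v _ => hw0 i v u
    by_cases hM : u ∈ M <;>
      simp [sum_starActive, redStarW_apply_rep, starTheta, hi, hM, h_erase, h_nonneg]
  · simp [redStarW_apply_rep, starTheta, hi]

theorem ltStep_starActive (hw0 : ∀ i v u, 0 ≤ w i v u) :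
    ltStep (redStarW Vmem w θ) (starTheta Vmem θ) (starActive Vmem G M R) =
      starActive Vmem (G ∪ M) (M ∪ G ∪ univ.filter fun u => ∃ i, u ∈ Vmem i ∧ u ∈ R i)
        (fun i => R i ∪ M ∪ triggered w θ i G) := by
  ext ⟨u, _ | i | _⟩
  · simp [ltStep, starTheta_le_sum_gateway_iff]
  · simp [ltStep, starTheta_le_sum_rep_iff _ _ _ _ hw0, triggered]
    tauto
  · simp [ltStep, starTheta_le_sum_mid_iff]

end CoupledStep

section Phases

variable {U : Type*} [Fintype U] [DecidableEq U] {k : ℕ}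
  {Vmem : Fin k → Finset U} {w : Fin k → U → U → ℝ} {θ : Fin k → U → ℝ}

variable (Vmem w θ) in
noncomputable def triggeredUsers (B : Finset U) : Finset U :=
  univ.filter fun u => ∃ i, u ∈ Vmem i ∧ u ∈ triggered w θ i B

theorem union_triggeredUsers
    (hwV : ∀ i v u, v ∉ Vmem i ∨ u ∉ Vmem i → w i v u = 0) (hθpos : ∀ i u, 0 < θ i u)
    (B : Finset U) :
    B ∪ triggeredUsers Vmem w θ B = B ∪ univ.filter fun u => ∃ i, θ i u ≤ ∑ v ∈ B, w i v u := by
  ext u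
  by_cases huB : u ∈ B
  · simp [huB]
  · have h_member : ∀ i, θ i u ≤ ∑ v ∈ B, w i v u → u ∈ Vmem i := fun i h => by
      by_contra hu
      rw [sum_eq_zero fun v _ => hwV i v u (.inr hu)] at h
      exact (hθpos i u).not_ge h
    simp only [triggeredUsers, triggered, mem_union, mem_filter, mem_univ, true_and,
      erase_eq_of_notMem huB, huB, false_or]
    exact ⟨fun ⟨i, _, h⟩ => ⟨i, h⟩, fun ⟨i, h⟩ => ⟨i, h_member i h, h⟩⟩

variable (Vmem) in
noncomputable def createdOver (B : Finset U) : Finset (U × StarIdx k) :=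
  starActive Vmem B B fun _ => B

local notation "step" => ltStep (redStarW Vmem w θ) (starTheta Vmem θ)

section Hops

variable (hw0 : ∀ i v u, 0 ≤ w i v u) (B : Finset U)
include hw0

theorem ltStep_createdOver :
    step (createdOver Vmem B) = starActive Vmem B B fun i => B ∪ triggered w θ i B := by
  rw [createdOver, ltStep_starActive _ _ _ hw0]
  ext ⟨u, _ | i | _⟩ <;> simp

theorem iterate_three_ltStep_createdOver :
    step^[3] (createdOver Vmem B) = createdOver Vmem (B ∪ triggeredUsers Vmem w θ B) := by
  have hop₂ : step (starActive Vmem B B fun i => B ∪ triggered w θ i B) =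
      starActive Vmem B (B ∪ triggeredUsers Vmem w θ B) fun i => B ∪ triggered w θ i B := by
    rw [ltStep_starActive _ _ _ hw0]
    ext ⟨u, _ | i | _⟩ <;> simp [triggeredUsers] <;> aesop
  have hop₃ : step (starActive Vmem B (B ∪ triggeredUsers Vmem w θ B)
      fun i => B ∪ triggered w θ i B) = createdOver Vmem (B ∪ triggeredUsers Vmem w θ B) := by
    rw [ltStep_starActive _ _ _ hw0]
    ext ⟨u, _ | i | _⟩ <;> simp [createdOver, triggeredUsers] <;> aesop
  simp only [Function.iterate_succ_apply', Function.iterate_zero_apply,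
    ltStep_createdOver hw0, hop₂, hop₃]

theorem iterate_two_ltStep_gateways :
    step^[2] (starActive Vmem B ∅ fun _ => ∅) = step^[2] (createdOver Vmem B) := by
  have hop₁ : step (starActive Vmem B ∅ fun _ => ∅) = starActive Vmem B B (triggered w θ · B) := by
    rw [ltStep_starActive _ _ _ hw0]
    ext ⟨u, _ | i | _⟩ <;> simp
  have hop₂ : step (starActive Vmem B B (triggered w θ · B)) =
      step (starActive Vmem B B fun i => B ∪ triggered w θ i B) := by
    rw [ltStep_starActive _ _ _ hw0, ltStep_starActive _ _ _ hw0]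
    ext ⟨u, _ | i | _⟩ <;> simp <;> aesop
  simp only [Function.iterate_succ_apply', Function.iterate_zero_apply, hop₁, hop₂,
    ltStep_createdOver hw0]

end Hops

theorem iterate_ltStep_createdOver (hw0 : ∀ i v u, 0 ≤ w i v u)
    (hwV : ∀ i v u, v ∉ Vmem i ∨ u ∉ Vmem i → w i v u = 0) (hθpos : ∀ i u, 0 < θ i u)
    (S : Finset U) (t : ℕ) :
    step^[3 * t] (createdOver Vmem S) = createdOver Vmem (multiIter w θ S t) := by
  induction t with
  | zero => rfl
  | succ t ih =>
    rw [Nat.mul_succ, add_comm, Function.iterate_add_apply, ih,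
      iterate_three_ltStep_createdOver hw0, union_triggeredUsers hwV hθpos]
    rfl

theorem ltIter_redStarW_gateways_three_mul (hw0 : ∀ i v u, 0 ≤ w i v u)
    (hwV : ∀ i v u, v ∉ Vmem i ∨ u ∉ Vmem i → w i v u = 0) (hθpos : ∀ i u, 0 < θ i u)
    (S : Finset U) {d : ℕ} (hd : 1 ≤ d) :
    ltIter (redStarW Vmem w θ) (starTheta Vmem θ) (S.image fun s => (s, .gateway)) (3 * d) =
      createdOver Vmem (multiIter w θ S d) := by
  have h_seed : S.image (fun s => (s, StarIdx.gateway)) = starActive Vmem S ∅ fun _ => ∅ := by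
    ext ⟨u, _ | i | _⟩ <;> simp
  obtain ⟨n, hn⟩ : ∃ n, 3 * d = n + 2 := ⟨3 * d - 2, by omega⟩
  rw [ltIter_eq_iterate, h_seed, hn, Function.iterate_add_apply, iterate_two_ltStep_gateways hw0,
    ← Function.iterate_add_apply, ← hn, iterate_ltStep_createdOver hw0 hwV hθpos]

theorem sum_redStarVW_createdOver (B : Finset U) :
    ∑ x ∈ createdOver Vmem B, redStarVW Vmem x = k * #B := by
  have h_double : ∑ u ∈ B, #{i | u ∈ Vmem i} = ∑ i, #(Vmem i ∩ (B ∩ Vmem i)) := by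
    convert sum_card_bipartiteAbove_eq_sum_card_bipartiteBelow
      (r := fun u i => u ∈ Vmem i) (s := B) (t := univ) using 3 <;>
    ext <;> simp [bipartiteAbove, bipartiteBelow]
  rw [createdOver, sum_starActive]
  simp only [redStarVW, sum_sub_distrib, sum_const, nsmul_eq_mul, sum_ite_mem, inter_assoc, mul_one]
  rw [← Nat.cast_sum, ← Nat.cast_sum, h_double]
  ring

end Phases

theorem reduced_star_beta_fraction_iff_general
    {U : Type*} [Fintype U] [DecidableEq U] {k : ℕ} (hk : 1 ≤ k)
    (Vmem : Fin k → Finset U) (w : Fin k → U → U → ℝ) (θ : Fin k → U → ℝ)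
    (hw0 : ∀ i v u, 0 ≤ w i v u)
    (hwV : ∀ i v u, v ∉ Vmem i ∨ u ∉ Vmem i → w i v u = 0)
    (hθpos : ∀ i u, 0 < θ i u)
    (β : ℝ)
    (S : Finset U) (d : ℕ) (hd : 1 ≤ d) :
    β * (Fintype.card U : ℝ) ≤ ((multiIter w θ S d).card : ℝ) ↔
      β * (∑ x ∈ Finset.univ.filter
              (fun x : U × StarIdx k => createdStar Vmem x),
            redStarVW Vmem x) ≤
        ∑ x ∈ ltIter (redStarW Vmem w θ) (starTheta Vmem θ)
            (S.image (fun s => (s, (StarIdx.gateway : StarIdx k)))) (3 * d),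
          redStarVW Vmem x := by
  have h_all_created : univ.filter (createdStar Vmem) = createdOver Vmem univ := by
    ext ⟨u, _ | i | _⟩ <;> simp [createdStar, createdOver]
  rw [ltIter_redStarW_gateways_three_mul hw0 hwV hθpos S hd, h_all_created,
    sum_redStarVW_createdOver, sum_redStarVW_createdOver, card_univ, mul_left_comm,
    mul_le_mul_iff_of_pos_left (Nat.cast_pos.mpr hk)]

/-- **Theorem 4, star case.** With the reduced star lossless coupling
scheme and the above vertex-weights, a seed set `S ⊆ U` influences at least a `β`
fraction of the users of `G^{1..k}` after `d` hops iff the total vertex-weight of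
the active vertices caused by `S' = { s⁰ : s ∈ S }` after `3d` hops in the reduced
star coupled network is at least a `β` fraction of the total vertex-weight of all
its vertices. -/
theorem reduced_star_beta_fraction_iff
    {U : Type*} [Fintype U] [DecidableEq U] {k : ℕ} (hk : 1 ≤ k)
    (Vmem : Fin k → Finset U) (w : Fin k → U → U → ℝ) (θ : Fin k → U → ℝ)
    (hw0 : ∀ i v u, 0 ≤ w i v u)
    (hwV : ∀ i v u, v ∉ Vmem i ∨ u ∉ Vmem i → w i v u = 0)
    (hθpos : ∀ i u, 0 < θ i u)
    (β : ℝ) (hβ0 : 0 < β) (hβ1 : β ≤ 1)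
    (S : Finset U) (d : ℕ) (hd : 1 ≤ d) :
    β * (Fintype.card U : ℝ) ≤ ((multiIter w θ S d).card : ℝ) ↔
      β * (∑ x ∈ Finset.univ.filter
              (fun x : U × StarIdx k => createdStar Vmem x),
            redStarVW Vmem x) ≤
        ∑ x ∈ ltIter (redStarW Vmem w θ) (starTheta Vmem θ)
            (S.image (fun s => (s, (StarIdx.gateway : StarIdx k)))) (3 * d),
          redStarVW Vmem x :=
  reduced_star_beta_fraction_iff_general hk Vmem w θ hw0 hwV hθpos β S d hd
end
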